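/- Let a, b ∈ A and projections p, q, p', q', p̃, q̃ with (1-q)a(1-p) = a, (1-q')b(1-p') = b, (1-q̃)ba(1-p̃) = ba, and a, b, ba invertible up to (p,q), (p',q'), (p̃,q̃) respectively. If p ∼ q and p' ∼ q', then p̃ ∼ q̃. -/

import Mathlib

/-!
Since `p ∼ q` via `v`, the element `u = a + v*` is invertible, with inverse `c a c + v` where
`c` inverts `a` up to `(p, q)`, and `a = u (1 - p)`; likewise `b = w (1 - p')`. Hence
`ba = g f (1 - p)` with `g = w u` invertible and `f = u⁻¹ (1 - p') u` idempotent, so it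
suffices to treat a product `f r` of two idempotents that is invertible up to `(P, Q)`, with
inverse `D`. If `α` is idempotent and `α x α = α`, then `1 - α x` and `1 - x α` are
algebraically equivalent. Three instances of this give
`P ∼ 1 - r (1 - P) ∼ 1 - (1 - Q) f ∼ Q`, the middle one with `α = r D (1 - Q) f` and
`x = f r`.
Algebraically equivalent projections are Murray–von Neumann equivalent: once `x y = p`,
`y x = q` with `x ∈ pAq`, `y ∈ qAp`, the element `x x* + 1 - p` is invertible (with inverse
`y* y + 1 - p`) and `v = (x x* + 1 - p)^(-1/2) x` satisfies `v v* = p`, `v* v = q`.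
-/

variable {A : Type*}

/-- An orthogonal projection in a C*-algebra. -/
def IsProjectionElem [CStarAlgebra A] (p : A) : Prop := IsSelfAdjoint p ∧ p * p = p

/-- Murray–von Neumann equivalence of projections: `p ∼ q`. -/
def MvNEquiv [CStarAlgebra A] (p q : A) : Prop := ∃ v : A, v * star v = p ∧ star v * v = q

/-- Murray–von Neumann subequivalence `p ⪯ q`: `p` is equivalent to a
subprojection of `q`. -/
def MvNSubEquiv [CStarAlgebra A] (p q : A) : Prop :=
  ∃ p' : A, IsProjectionElem p' ∧ p' * q = p' ∧ q * p' = p' ∧ MvNEquiv p p'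

/-- `a` is invertible up to the pair of projections `(p, q)`. -/
def InvertibleUpTo [CStarAlgebra A] (a p q : A) : Prop :=
  ∃ b : A, (1 - q) * a * (1 - p) * b = 1 - q ∧ b * ((1 - q) * a * (1 - p)) = 1 - p

/-- An ideal of finite type elements in a unital C*-algebra `A`
(Kečkić–Lazović): a selfadjoint (two-sided, complex-linear) ideal possessing an
approximate unit of projections, and such that for any two projections `p, q`
in the ideal there is `v` with `v v* = q` and `v* v ⊥ p`. -/
structure FiniteTypeIdeal (A : Type*) [CStarAlgebra A] where
  carrier : Set A
  zero_mem : (0 : A) ∈ carrier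
  add_mem : ∀ {a b : A}, a ∈ carrier → b ∈ carrier → a + b ∈ carrier
  smul_mem : ∀ (c : ℂ) {a : A}, a ∈ carrier → c • a ∈ carrier
  mul_mem_left : ∀ (a : A) {b : A}, b ∈ carrier → a * b ∈ carrier
  mul_mem_right : ∀ (a : A) {b : A}, b ∈ carrier → b * a ∈ carrier
  star_mem : ∀ {a : A}, a ∈ carrier → star a ∈ carrier
  approx_unit : ∀ {a : A}, a ∈ carrier → ∀ ε : ℝ, 0 < ε →
    ∃ p ∈ carrier, IsProjectionElem p ∧ ‖a * p - a‖ < ε ∧ ‖p * a - a‖ < ε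
  exchange : ∀ {p q : A}, p ∈ carrier → q ∈ carrier →
    IsProjectionElem p → IsProjectionElem q →
    ∃ v : A, v * star v = q ∧ IsProjectionElem (star v * v + p)

variable [CStarAlgebra A]

section Ring

variable {R : Type*} [Ring R]

theorem IsIdempotentElem.mul_eq_zero_of_mul_one_sub_eq {p a b : R} (hp : IsIdempotentElem p)
    (h : b * (1 - p) = a) : a * p = 0 := by
  rw [← h, mul_assoc, hp.one_sub_mul_self, mul_zero]

theorem IsIdempotentElem.mul_eq_zero_of_one_sub_mul_eq {q a b : R} (hq : IsIdempotentElem q)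
    (h : (1 - q) * b = a) : q * a = 0 := by
  rw [← h, ← mul_assoc, hq.mul_one_sub_self, zero_mul]

def AlgebraicallyEquivalent (e f : R) : Prop := ∃ x y : R, x * y = e ∧ y * x = f

namespace AlgebraicallyEquivalent

theorem trans {e f g : R} (he : IsIdempotentElem e) (hg : IsIdempotentElem g)
    (hef : AlgebraicallyEquivalent e f) (hfg : AlgebraicallyEquivalent f g) :
    AlgebraicallyEquivalent e g := by
  obtain ⟨x, y, hxy, hyx⟩ := hef
  obtain ⟨s, t, hst, hts⟩ := hfg
  refine ⟨x * s, t * y, ?_, ?_⟩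
  · calc x * s * (t * y) = x * y * (x * y) := by
          rw [mul_assoc x, ← mul_assoc s, hst, ← hyx]; noncomm_ring
      _ = e := by rw [hxy, he.eq]
  · calc t * y * (x * s) = t * s * (t * s) := by
          rw [mul_assoc t, ← mul_assoc y, hyx, ← hst]; noncomm_ring
      _ = g := by rw [hts, hg.eq]

theorem exists_corner {e f : R} (he : IsIdempotentElem e) (hf : IsIdempotentElem f)
    (hef : AlgebraicallyEquivalent e f) : ∃ x y : R,
      x * y = e ∧ y * x = f ∧ e * x = x ∧ x * f = x ∧ f * y = y ∧ y * e = y := by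
  obtain ⟨x, y, hxy, hyx⟩ := hef
  refine ⟨e * x * f, f * y * e, ?_, ?_, ?_, ?_, ?_, ?_⟩
  · calc e * x * f * (f * y * e) = x * y * (x * y) * (x * y) * (x * y) * (x * y) := by
          rw [← hyx, ← hxy]; noncomm_ring
      _ = e := by simp only [hxy, he.eq]
  · calc f * y * e * (e * x * f) = y * x * (y * x) * (y * x) * (y * x) * (y * x) := by
          rw [← hyx, ← hxy]; noncomm_ring
      _ = f := by simp only [hyx, hf.eq]
  · rw [← mul_assoc, ← mul_assoc, he.eq]
  · rw [mul_assoc, hf.eq]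
  · rw [← mul_assoc, ← mul_assoc, hf.eq]
  · rw [mul_assoc, he.eq]

theorem units_conj (g : Rˣ) {Q : R} (hQ : IsIdempotentElem Q) :
    AlgebraicallyEquivalent (↑g⁻¹ * Q * g) Q :=
  ⟨↑g⁻¹ * Q, Q * g, by rw [mul_assoc, ← mul_assoc Q, hQ.eq, mul_assoc],
    by rw [mul_assoc, Units.mul_inv_cancel_left, hQ.eq]⟩

theorem one_sub_mul_comm {α x : R} (hα : IsIdempotentElem α) (hαxα : α * x * α = α) :
    AlgebraicallyEquivalent (1 - α * x) (1 - x * α) := by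
  refine ⟨(1 - α * x) * (1 - x * α), 1 - α, ?_, ?_⟩
  · calc (1 - α * x) * (1 - x * α) * (1 - α)
        = 1 - α * x + (α * x * α - α) + (x - α * x * x) * (α * α - α) := by noncomm_ring
      _ = 1 - α * x := by simp only [hαxα, hα.eq, sub_self, mul_zero, add_zero]
  · calc (1 - α) * ((1 - α * x) * (1 - x * α))
        = 1 - x * α + (α * x * α - α) + (α * α - α) * (x - x * x * α) := by noncomm_ring
      _ = 1 - x * α := by simp only [hαxα, hα.eq, sub_self, zero_mul, add_zero]

theorem of_one_sub_mul_eq {P r : R} (hP : IsIdempotentElem P) (hPr : (1 - P) * r = 1 - P) :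
    AlgebraicallyEquivalent P (1 - r * (1 - P)) := by
  simpa only [hPr, sub_sub_cancel] using one_sub_mul_comm hP.one_sub
    (by rw [hPr, hP.one_sub.eq] : (1 - P) * r * (1 - P) = 1 - P)

theorem of_mul_one_sub_eq {Q f : R} (hQ : IsIdempotentElem Q) (hfQ : f * (1 - Q) = 1 - Q) :
    AlgebraicallyEquivalent (1 - (1 - Q) * f) Q := by
  simpa only [hfQ, sub_sub_cancel] using one_sub_mul_comm hQ.one_sub
    (by rw [mul_assoc, hfQ, hQ.one_sub.eq] : (1 - Q) * f * (1 - Q) = 1 - Q)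

theorem of_mul_idempotents {f r D P Q : R} (hf : IsIdempotentElem f) (hr : IsIdempotentElem r)
    (hP : IsIdempotentElem P) (hQ : IsIdempotentElem Q) (h₁ : f * r * D = 1 - Q)
    (h₂ : D * (f * r) = 1 - P) (h₃ : Q * (f * r) = 0) :
    AlgebraicallyEquivalent P Q := by
  have hPr : (1 - P) * r = 1 - P := by
    have : (1 - P) * (1 - r) = 0 := by
      rw [← h₂, mul_assoc, mul_assoc, hr.mul_one_sub_self, mul_zero, mul_zero]
    rwa [mul_sub, mul_one, sub_eq_zero, eq_comm] at this
  have hfQ : f * (1 - Q) = 1 - Q := by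
    have : (1 - f) * (1 - Q) = 0 := by
      rw [← h₁, ← mul_assoc, ← mul_assoc, hf.one_sub_mul_self, zero_mul, zero_mul]
    rwa [sub_mul, one_mul, sub_eq_zero, eq_comm] at this
  set α := r * D * (1 - Q) * f
  have hα : IsIdempotentElem α := by
    calc α * α = r * D * ((1 - Q) * (f * r * D) * (1 - Q)) * f := by simp only [α, mul_assoc]
      _ = α := by rw [h₁, hQ.one_sub.eq, hQ.one_sub.eq]
  have hαM : α * (f * r) = r * (1 - P) := by
    calc α * (f * r) = r * (D * ((1 - Q) * (f * r))) := by
          simp only [α, mul_assoc, hf.mul_self_mul]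
      _ = r * (1 - P) := by rw [sub_mul, one_mul, h₃, sub_zero, h₂]
  have hMα : f * r * α = (1 - Q) * f := by
    calc f * r * α = f * r * D * (1 - Q) * f := by simp only [α, mul_assoc, hr.mul_self_mul]
      _ = (1 - Q) * f := by rw [h₁, hQ.one_sub.eq]
  have hαMα : α * (f * r) * α = α := by
    calc α * (f * r) * α = r * D * (1 - Q) * (f * (1 - Q)) * f := by
          rw [mul_assoc, hMα]; simp only [α, mul_assoc]
      _ = α := by rw [hfQ, hQ.one_sub.mul_mul_self]
  have hE : IsIdempotentElem (1 - r * (1 - P)) := by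
    refine IsIdempotentElem.one_sub ?_
    rw [IsIdempotentElem, mul_assoc, ← mul_assoc (1 - P), hPr, hP.one_sub.eq]
  have hEG : AlgebraicallyEquivalent (1 - r * (1 - P)) (1 - (1 - Q) * f) := by
    simpa only [hαM, hMα] using one_sub_mul_comm hα hαMα
  exact (of_one_sub_mul_eq hP hPr).trans hP hQ (hEG.trans hE hQ (of_mul_one_sub_eq hQ hfQ))

theorem of_units_mul_idempotents (u w : Rˣ) {e e' d P Q : R} (he : IsIdempotentElem e)
    (he' : IsIdempotentElem e') (hP : IsIdempotentElem P) (hQ : IsIdempotentElem Q)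
    (h₁ : w * e' * (u * e) * d = 1 - Q) (h₂ : d * (w * e' * (u * e)) = 1 - P)
    (hdiag : (1 - Q) * (w * e' * (u * e)) * (1 - P) = w * e' * (u * e)) :
    AlgebraicallyEquivalent P Q := by
  set g := w * u
  set f := ↑u⁻¹ * e' * ↑u
  have hz : ↑w * e' * (↑u * e) = ↑g * (f * e) := by simp [g, f, mul_assoc]
  have h₃ : Q * (↑g * (f * e)) = 0 :=
    hQ.mul_eq_zero_of_one_sub_mul_eq (b := w * e' * (u * e) * (1 - P))
      (by rw [← mul_assoc, hdiag, hz])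
  rw [hz] at h₁ h₂
  have hf : IsIdempotentElem f := by
    simp [IsIdempotentElem, f, mul_assoc, he'.mul_self_mul]
  have hQ' : IsIdempotentElem (↑g⁻¹ * Q * ↑g) := by
    simp [IsIdempotentElem, mul_assoc, hQ.mul_self_mul]
  refine (of_mul_idempotents hf he hP hQ' (D := d * g) ?_ ?_ ?_).trans hP hQ (units_conj g hQ)
  · calc f * e * (d * g) = ↑g⁻¹ * (↑g * (f * e) * d) * g := by simp [mul_assoc]
      _ = 1 - ↑g⁻¹ * Q * g := by rw [h₁]; simp [mul_sub, sub_mul, mul_assoc]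
  · rw [mul_assoc, h₂]
  · rw [mul_assoc, mul_assoc, h₃, mul_zero]

end AlgebraicallyEquivalent

theorem exists_unit_mul_one_sub_eq {a c p q : R} (hp : IsIdempotentElem p)
    (hq : IsIdempotentElem q) (hdiag : (1 - q) * a * (1 - p) = a) (hac : a * c = 1 - q)
    (hca : c * a = 1 - p) (hpq : AlgebraicallyEquivalent p q) :
    ∃ u : Rˣ, ↑u * (1 - p) = a := by
  obtain ⟨v, w, hvw, hwv, hpv, hvq, hqw, hwp⟩ := hpq.exists_corner hp hq
  have hap : a * p = 0 := hp.mul_eq_zero_of_mul_one_sub_eq hdiag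
  have hqa : q * a = 0 :=
    hq.mul_eq_zero_of_one_sub_mul_eq (b := a * (1 - p)) (by rw [← mul_assoc, hdiag])
  have hav : a * v = 0 := by rw [← hpv, ← mul_assoc, hap, zero_mul]
  have hva : v * a = 0 := by rw [← hvq, mul_assoc, hqa, mul_zero]
  have hwc : w * (c * a * c) = 0 := by
    rw [hca, ← mul_assoc, ← hwp, mul_assoc w p, hp.mul_one_sub_self, mul_zero, zero_mul]
  have hcw : c * a * c * w = 0 := by
    rw [mul_assoc c, hac, mul_assoc, ← hqw, ← mul_assoc (1 - q), hq.one_sub_mul_self,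
      zero_mul, mul_zero]
  refine ⟨⟨a + w, c * a * c + v, ?_, ?_⟩, ?_⟩
  · calc (a + w) * (c * a * c + v) = a * c * (a * c) + a * v + w * (c * a * c) + w * v := by
          noncomm_ring
      _ = 1 := by rw [hac, hq.one_sub.eq, hav, hwc, hwv]; abel
  · calc (c * a * c + v) * (a + w) = c * a * (c * a) + c * a * c * w + v * a + v * w := by
          noncomm_ring
      _ = 1 := by rw [hcw, hca, hp.one_sub.eq, hva, hvw]; abel
  · show (a + w) * (1 - p) = a
    rw [add_mul, mul_sub, mul_sub, hap, hwp]
    simp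

end Ring

theorem IsStarProjection.star_mul_eq_of_mul_eq {R : Type*} [Mul R] [StarMul R] {p x : R}
    (hp : IsStarProjection p) (hpx : p * x = x) : star x * p = star x := by
  rw [← hp.isSelfAdjoint.star_eq, ← star_mul, hpx]

theorem isUnit_mul_star_add_one_sub {R : Type*} [Ring R] [StarRing R] {p q x y : R}
    (hp : IsStarProjection p) (hq : IsSelfAdjoint q) (hxy : x * y = p) (hyx : y * x = q)
    (hpx : p * x = x) (hxq : x * q = x) (hyp : y * p = y) :
    IsUnit (x * star x + (1 - p)) := by
  have hxyx : x * (star x * star y) * y = p := by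
    rw [← star_mul, hyx, hq.star_eq, hxq, hxy]
  have hyxy : star y * (y * x) * star x = p := by
    rw [hyx, ← hq.star_eq, ← star_mul, ← star_mul, ← mul_assoc, hxq, hxy,
      hp.isSelfAdjoint.star_eq]
  have hsxp : star x * (1 - p) = 0 := by
    rw [mul_sub, mul_one, hp.star_mul_eq_of_mul_eq hpx, sub_self]
  have hpsy : (1 - p) * star y = 0 := by
    rw [← hyp, star_mul, hp.isSelfAdjoint.star_eq, ← mul_assoc,
      hp.isIdempotentElem.one_sub_mul_self, zero_mul]
  refine isUnit_iff_exists.mpr ⟨star y * y + (1 - p), ?_, ?_⟩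
  · calc (x * star x + (1 - p)) * (star y * y + (1 - p))
        = x * (star x * star y) * y + x * (star x * (1 - p)) + (1 - p) * star y * y
          + (1 - p) * (1 - p) := by noncomm_ring
      _ = 1 := by rw [hxyx, hsxp, hpsy, hp.one_sub.isIdempotentElem.eq]; noncomm_ring
  · calc (star y * y + (1 - p)) * (x * star x + (1 - p))
        = star y * (y * x) * star x + star y * (y * (1 - p)) + (1 - p) * x * star x
          + (1 - p) * (1 - p) := by noncomm_ring
      _ = 1 := by
        rw [hyxy, mul_sub, mul_one, hyp, sub_mul, one_mul, hpx, hp.one_sub.isIdempotentElem.eq]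
        noncomm_ring

theorem IsProjectionElem.isStarProjection {p : A} (hp : IsProjectionElem p) :
    IsStarProjection p :=
  ⟨hp.2, hp.1⟩

theorem IsStarProjection.exists_isSelfAdjoint_conj_mul_star_self_eq {p x : A}
    (hp : IsStarProjection p) (hpx : p * x = x) (hunit : IsUnit (x * star x + (1 - p))) :
    ∃ s : A, IsSelfAdjoint s ∧ s * (x * star x) * s = p ∧ x * star x * (s * s) * x = x := by
  let _ := CStarAlgebra.spectralOrder A
  let _ := CStarAlgebra.spectralOrderedRing A
  set a := x * star x + (1 - p)
  have ha : IsStrictlyPositive a :=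
    hunit.isStrictlyPositive (add_nonneg (mul_star_self_nonneg x) hp.one_sub_nonneg)
  have hpx' : (1 - p) * x = 0 := by rw [sub_mul, one_mul, hpx, sub_self]
  have hap : Commute a p := by
    calc a * p = x * (star x * p) + (1 - p) * p := by simp only [a]; noncomm_ring
      _ = p * (x * star x) + p * (1 - p) := by
        rw [hp.star_mul_eq_of_mul_eq hpx, hp.isIdempotentElem.one_sub_mul_self,
          hp.isIdempotentElem.mul_one_sub_self, ← mul_assoc, hpx]
      _ = p * a := (mul_add ..).symm
  have hpa : (1 - p) * a = 1 - p := by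
    rw [mul_add, ← mul_assoc, hpx', zero_mul, zero_add, hp.one_sub.isIdempotentElem.eq]
  set s := a ^ (-(1 / 2) : ℝ)
  have hsas : s * a * s = 1 := CFC.conjugate_rpow_neg_one_half a
  have hsp : Commute s (1 - p) := (Commute.one_right s).sub_right (hap.cfc_nnreal _)
  have hsa : Commute s a := (Commute.refl a).cfc_nnreal _
  refine ⟨s, CFC.rpow_nonneg.isSelfAdjoint, ?_, ?_⟩
  · calc s * (x * star x) * s = s * a * s - s * ((1 - p) * a) * s := by
          rw [hpa]; simp only [a]; noncomm_ring
      _ = s * a * s - (1 - p) * (s * a * s) := by rw [← mul_assoc s, hsp.eq]; noncomm_ring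
      _ = p := by rw [hsas]; noncomm_ring
  · calc x * star x * (s * s) * x = a * (s * s) * x - (1 - p) * (s * s) * x := by
          simp only [a]; noncomm_ring
      _ = s * a * s * x - s * s * ((1 - p) * x) := by
        rw [← mul_assoc a, ← hsa.eq, ← (hsp.mul_left hsp).eq, mul_assoc (s * s)]
      _ = x := by rw [hsas, hpx', one_mul, mul_zero, sub_zero]

theorem MvNEquiv.of_algebraicallyEquivalent {p q : A} (hp : IsStarProjection p)
    (hq : IsStarProjection q) (hpq : AlgebraicallyEquivalent p q) : MvNEquiv p q := by
  obtain ⟨x, y, hxy, hyx, hpx, hxq, -, hyp⟩ :=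
    hpq.exists_corner hp.isIdempotentElem hq.isIdempotentElem
  obtain ⟨s, hs, hsxs, hxs⟩ := hp.exists_isSelfAdjoint_conj_mul_star_self_eq hpx
    (isUnit_mul_star_add_one_sub hp hq.isSelfAdjoint hxy hyx hpx hxq hyp)
  refine ⟨s * x, ?_, ?_⟩
  · rw [star_mul, hs.star_eq, ← hsxs]
    noncomm_ring
  · have hqw : q * (star x * (s * s) * x) = star x * (s * s) * x := by
      rw [← mul_assoc, ← mul_assoc, ← hq.isSelfAdjoint.star_eq, ← star_mul, hxq]
    calc star (s * x) * (s * x) = star x * (s * s) * x := by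
          rw [star_mul, hs.star_eq]; noncomm_ring
      _ = q * (star x * (s * s) * x) := hqw.symm
      _ = y * (x * star x * (s * s) * x) := by rw [← hyx]; noncomm_ring
      _ = q := by rw [hxs, hyx]

theorem MvNEquiv.algebraicallyEquivalent {p q : A} (h : MvNEquiv p q) :
    AlgebraicallyEquivalent p q :=
  let ⟨v, hv₁, hv₂⟩ := h
  ⟨v, star v, hv₁, hv₂⟩

theorem InvertibleUpTo.exists_mul_eq {a p q : A} (h : InvertibleUpTo a p q)
    (hdiag : (1 - q) * a * (1 - p) = a) : ∃ c, a * c = 1 - q ∧ c * a = 1 - p := by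
  rwa [InvertibleUpTo, hdiag] at h

/-- Proposition 20 of [BJMA]: if `a, b, ba` are diagonal with respect to, and
invertible up to, the pairs `(p,q)`, `(p',q')`, `(p̃,q̃)` respectively, and
`p ∼ q`, `p' ∼ q'`, then `p̃ ∼ q̃`. -/
theorem mvnEquiv_of_composition (a b p q p' q' pt qt : A)
    (hp : IsProjectionElem p) (hq : IsProjectionElem q)
    (hp' : IsProjectionElem p') (hq' : IsProjectionElem q')
    (hpt : IsProjectionElem pt) (hqt : IsProjectionElem qt)
    (hda : (1 - q) * a * (1 - p) = a)
    (hdb : (1 - q') * b * (1 - p') = b)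
    (hdba : (1 - qt) * (b * a) * (1 - pt) = b * a)
    (hia : InvertibleUpTo a p q)
    (hib : InvertibleUpTo b p' q')
    (hiba : InvertibleUpTo (b * a) pt qt)
    (e1 : MvNEquiv p q) (e2 : MvNEquiv p' q') :
    MvNEquiv pt qt := by
  obtain ⟨c, hac, hca⟩ := hia.exists_mul_eq hda
  obtain ⟨c', hbc', hc'b⟩ := hib.exists_mul_eq hdb
  obtain ⟨d, hbad, hdba'⟩ := hiba.exists_mul_eq hdba
  obtain ⟨u, rfl⟩ := exists_unit_mul_one_sub_eq hp.2 hq.2 hda hac hca e1.algebraicallyEquivalent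
  obtain ⟨w, rfl⟩ :=
    exists_unit_mul_one_sub_eq hp'.2 hq'.2 hdb hbc' hc'b e2.algebraicallyEquivalent
  exact .of_algebraicallyEquivalent hpt.isStarProjection hqt.isStarProjection
    (.of_units_mul_idempotents u w (IsIdempotentElem.one_sub hp.2)
      (IsIdempotentElem.one_sub hp'.2) hpt.2 hqt.2 hbad hdba' hdba)
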